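/- For b ≥ 0 define the polynomial h_b(t) = Σ K^{-1}_{(1^k,3^l),(2^b)} t^k ∈ ℤ[t], where the sum is over all k, l ≥ 0 with k+3l = 2b and (2^b) is the partition with b parts equal to 2. Then for every b ≥ 3 one has h_b(t) = −t·h_{b−2}(t) + h_{b−3}(t). -/

import Mathlib

open Finset MvPolynomial

/-- The `p`-th entry of an `n`-tuple, with default value `0` out of range. -/
def nth (n : ℕ) (f : Fin n → ℕ) (p : ℕ) : ℕ := if h : p < n then f ⟨p, h⟩ else 0

/-- `a_α = det (x_j ^ α_i)`. -/
noncomputable def aDet (n : ℕ) (α : Fin n → ℕ) : MvPolynomial (Fin n) ℤ :=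
  (Matrix.of fun i j : Fin n => (X j : MvPolynomial (Fin n) ℤ) ^ α i).det

/-- `x ^ β = ∏ x_i ^ β_i`. -/
noncomputable def xpow (n : ℕ) (β : Fin n → ℕ) : MvPolynomial (Fin n) ℤ :=
  ∏ i, X i ^ β i

/-- The monomial symmetric polynomial `m_lam(n) = Σ_{w ∈ Sₙ^lam} x^{w(lam)}`:
the sum of `x^β` over all distinct rearrangements `β` of `lam`. -/
noncomputable def msym (n : ℕ) (lam : Fin n → ℕ) : MvPolynomial (Fin n) ℤ :=
  ∑ β ∈ Finset.univ.image (fun σ : Equiv.Perm (Fin n) => lam ∘ σ), xpow n β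

/-- `δ(n) = (0, 1, …, n-1)`. -/
def deltaN (n : ℕ) : Fin n → ℕ := fun i => (i : ℕ)

/-- `P(m∣n)`: partitions of `m` as nondecreasing `n`-tuples (zeros at the beginning). -/
def Par (n m : ℕ) : Finset (Fin n → ℕ) :=
  (Fintype.piFinset fun _ : Fin n => Finset.range (m + 1)).filter
    fun μ => (∀ i j : Fin n, i ≤ j → μ i ≤ μ j) ∧ ∑ i, μ i = m

/-- `K` is the inverse Kostka matrix in `n` variables: for every weight `m` and
every `lam ∈ P(m∣n)`, `m_lam(n) · a_{δ(n)} = Σ_{μ ∈ P(m∣n)} K lam μ · a_{μ+δ(n)}`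
(equivalently `m_lam(n) = Σ_μ K lam μ · s_μ(n)`). -/
def IsInvKostka (n : ℕ) (K : (Fin n → ℕ) → (Fin n → ℕ) → ℤ) : Prop :=
  ∀ m : ℕ, ∀ lam ∈ Par n m,
    msym n lam * aDet n (deltaN n) =
      ∑ μ ∈ Par n m, C (K lam μ) * aDet n (fun i => μ i + (i : ℕ))

/-- The partition `(1^a, 2^b, 3^c)` as a nondecreasing `n`-tuple
(requires `a + b + c ≤ n`). -/
def tuple3 (n a b c : ℕ) : Fin n → ℕ :=
  fun i => if (i : ℕ) < n - a - b - c then 0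
    else if (i : ℕ) < n - b - c then 1
    else if (i : ℕ) < n - c then 2 else 3

/-- `h_b(t) = Σ_{k+3l=2b} K⁻¹_{(1^k,3^l),(2^b)} t^k`. -/
noncomputable def hpoly (n : ℕ) (K : (Fin n → ℕ) → (Fin n → ℕ) → ℤ) (b : ℕ) :
    Polynomial ℤ :=
  ∑ l ∈ Finset.range (2 * b / 3 + 1),
    Polynomial.C (K (tuple3 n (2 * b - 3 * l) 0 l) (tuple3 n 0 b 0)) *
      Polynomial.X ^ (2 * b - 3 * l)

/-!
Let `f(y) = 1 + t y + y³` and `F = ∏ⱼ f(xⱼ) = ∑_{k,l} tᵏ m_{(1ᵏ,3ˡ)}`. Multiplying by `a_δ` and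
expanding each `m_{(1ᵏ,3ˡ)} a_δ` in alternants, the inverse Kostka property shows that the
coefficient of `x^{(2ᵇ)+δ}` in `F a_δ` is `h_b(t)`. On the other hand `F a_δ = det (f(xⱼ) xⱼ^i)`,
whose coefficient at an exponent `γ` is `det ((f yⁱ)_{γⱼ})`. For
`γ = (2ᵇ) + δ` this matrix is unitriangular away from its last `b` rows and columns, where it is
the band matrix with `1, t` on the two subdiagonals and `1` on the superdiagonal. Expanding that
determinant along its first row and then its first column gives `D_b = -t D_{b-2} + D_{b-3}`.
-/

open scoped Polynomial

section CoeffDet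

variable {ι R : Type*} [Fintype ι] [CommRing R]

theorem coeff_prod_aeval_X (p : ι → R[X]) (m : ι →₀ ℕ) :
    coeff m (∏ j, Polynomial.aeval (X j : MvPolynomial ι R) (p j)) = ∏ j, (p j).coeff (m j) := by
  classical
  have hexp : ∏ j, Polynomial.aeval (X j : MvPolynomial ι R) (p j) =
      ∑ x ∈ Fintype.piFinset fun j => range ((p j).natDegree + 1),
        monomial (Finsupp.equivFunOnFinite.symm x) (∏ j, (p j).coeff (x j)) := by
    simp_rw [Polynomial.aeval_eq_sum_range, prod_univ_sum, smul_eq_C_mul, prod_mul_distrib,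
      ← map_prod, monomial_eq, Finsupp.prod_fintype _ _ (fun _ => pow_zero _)]
    rfl
  have hm : ∀ x : ι → ℕ, Finsupp.equivFunOnFinite.symm x = m ↔ x = ⇑m :=
    fun x => Finsupp.equivFunOnFinite.symm_apply_eq
  simp_rw [hexp, coeff_sum, coeff_monomial, hm, sum_ite_eq', Fintype.mem_piFinset, mem_range,
    Nat.lt_succ_iff]
  split_ifs with hdeg
  · rfl
  · push Not at hdeg
    obtain ⟨j, hj⟩ := hdeg
    exact (prod_eq_zero (mem_univ j) (Polynomial.coeff_eq_zero_of_natDegree_lt hj)).symm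

theorem coeff_det_aeval_X [DecidableEq ι] (p : ι → R[X]) (m : ι →₀ ℕ) :
    coeff m (Matrix.of fun i j => Polynomial.aeval (X j : MvPolynomial ι R) (p i)).det =
      (Matrix.of fun i j => (p i).coeff (m j)).det := by
  simp only [Matrix.det_apply, coeff_sum, Units.smul_def, coeff_smul, Matrix.of_apply,
    coeff_prod_aeval_X]

end CoeffDet

theorem Matrix.det_ite_eq_of_strictMono {ι β R : Type*} [Fintype ι] [LinearOrder ι]
    [LinearOrder β] [CommRing R] {α γ : ι → β} (hα : StrictMono α) (hγ : StrictMono γ) :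
    (Matrix.of fun i j => if γ j = α i then (1 : R) else 0).det = if γ = α then 1 else 0 := by
  split_ifs with hγα
  · subst hγα
    rw [← Matrix.det_one (R := R) (n := ι)]
    congr 1
    ext i j
    simp [Matrix.one_apply, hγ.injective.eq_iff, eq_comm]
  · rw [Matrix.det_apply]
    refine sum_eq_zero fun σ _ => ?_
    obtain ⟨j, hj⟩ : ∃ j, γ j ≠ α (σ j) := by
      by_contra! hall
      have hσ : StrictMono σ := fun i j hij => hα.lt_iff_lt.1 (by simpa [← hall] using hγ hij)
      exact hγα (funext fun i => by simpa [hσ.eq_id] using hall i)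
    rw [prod_eq_zero (mem_univ j) (by simp [hj]), smul_zero]

theorem coeff_aDet_of_strictMono {n : ℕ} {α : Fin n → ℕ} (hα : StrictMono α) {m : Fin n →₀ ℕ}
    (hm : StrictMono m) : coeff m (aDet n α) = if ⇑m = α then 1 else 0 := by
  have hpow : aDet n α = (Matrix.of fun i j =>
      Polynomial.aeval (X j : MvPolynomial (Fin n) ℤ) ((Polynomial.X : ℤ[X]) ^ α i)).det := by
    simp [aDet]
  simp only [hpow, coeff_det_aeval_X, Polynomial.coeff_X_pow]
  exact Matrix.det_ite_eq_of_strictMono hα hm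

section CoeffMatrix

variable {R : Type*} [CommRing R]

noncomputable def coeffMatrix {k : ℕ} (q : R[X]) (γ : Fin k → ℕ) : Matrix (Fin k) (Fin k) R :=
  Matrix.of fun i j => (q * Polynomial.X ^ (i : ℕ)).coeff (γ j)

theorem coeff_prod_aeval_mul_det_X_pow {n : ℕ} (q : R[X]) (m : Fin n →₀ ℕ) :
    coeff m ((∏ j, Polynomial.aeval (X j : MvPolynomial (Fin n) R) q) *
      (Matrix.of fun i j : Fin n => (X j : MvPolynomial (Fin n) R) ^ (i : ℕ)).det) =
    (coeffMatrix q m).det := by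
  rw [← Matrix.det_mul_row]
  have hrow : (Matrix.of fun i j : Fin n => Polynomial.aeval (X j : MvPolynomial (Fin n) R) q *
      Matrix.of (fun i j : Fin n => (X j : MvPolynomial (Fin n) R) ^ (i : ℕ)) i j) =
      Matrix.of fun i j : Fin n => Polynomial.aeval (X j) (q * Polynomial.X ^ (i : ℕ)) := by
    ext i j
    simp
  rw [hrow, coeff_det_aeval_X]
  rfl

theorem det_coeffMatrix_delta_add_twos (q : R[X]) (hq : q.coeff 0 = 1) (b c : ℕ) :
    (coeffMatrix q fun s : Fin (b + c) => if (s : ℕ) < c then (s : ℕ) else s + 2).det =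
      (coeffMatrix q fun s : Fin b => (s : ℕ) + 2).det := by
  induction c with
  | zero => simp
  | succ c ih =>
    set γ : Fin (b + (c + 1)) → ℕ := fun s => if (s : ℕ) < c + 1 then (s : ℕ) else s + 2
    have hcol : ∀ i : Fin (b + c), coeffMatrix q γ i.succ 0 = 0 := fun i => by
      simp [coeffMatrix, γ, Polynomial.coeff_mul_X_pow']
    have hminor : (coeffMatrix q γ).submatrix Fin.succ Fin.succ =
        coeffMatrix q fun s : Fin (b + c) => if (s : ℕ) < c then (s : ℕ) else s + 2 := by
      ext r s
      simp only [coeffMatrix, γ, Matrix.submatrix_apply, Matrix.of_apply, Fin.val_succ]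
      rw [show (if (s : ℕ) + 1 < c + 1 then (s : ℕ) + 1 else s + 1 + 2) =
        (if (s : ℕ) < c then (s : ℕ) else s + 2) + 1 by split_ifs <;> omega,
        pow_succ, ← mul_assoc, Polynomial.coeff_mul_X]
    rw [Matrix.det_succ_column_zero, Fin.sum_univ_succ]
    have h00 : coeffMatrix q γ 0 0 = 1 := by simp [coeffMatrix, γ, hq]
    simp only [hcol, h00, Fin.succAbove_zero, hminor, ih, mul_zero, zero_mul, sum_const_zero,
      add_zero, Fin.val_zero, pow_zero, one_mul]

end CoeffMatrix

section Recurrence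

variable {R : Type*} [CommRing R] (a : R)

noncomputable def genPoly : R[X] := 1 + Polynomial.C a * Polynomial.X + Polynomial.X ^ 3

noncomputable def bandMatrix (k : ℕ) : Matrix (Fin k) (Fin k) R :=
  coeffMatrix (genPoly a) fun s => (s : ℕ) + 2

theorem bandMatrix_apply {k : ℕ} (r s : Fin k) :
    bandMatrix a k r s = if (r : ℕ) = s + 2 then 1 else if (r : ℕ) = s + 1 then a
      else if (r : ℕ) + 1 = s then 1 else 0 := by
  simp only [bandMatrix, coeffMatrix, Matrix.of_apply, Polynomial.coeff_mul_X_pow', genPoly,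
    Polynomial.coeff_add, Polynomial.coeff_one, Polynomial.coeff_C_mul_X, Polynomial.coeff_X_pow]
  split_ifs <;> first | omega | simp

theorem det_bandMatrix_add_three (m : ℕ) :
    (bandMatrix a (m + 3)).det = -a * (bandMatrix a (m + 1)).det + (bandMatrix a m).det := by
  set M := (bandMatrix a (m + 3)).submatrix Fin.succ (Fin.succAbove 1)
  set N := M.submatrix (Fin.succAbove 1) Fin.succ
  -- Laplace expansions along the first row `(0, 1, 0, …)` of `bandMatrix a (m + 3)`,
  -- the first column `(a, 1, 0, …)` of `M` and the first row `(1, 0, …)` of `N`.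
  have hT : (bandMatrix a (m + 3)).det = -M.det := by
    rw [Matrix.det_succ_row_zero, sum_eq_single 1 (fun j _ hj => ?_) (by simp)]
    · simp [bandMatrix_apply, M]
    · have hj' : (j : ℕ) ≠ 1 := by simpa [Fin.ext_iff] using hj
      simp [bandMatrix_apply, hj'.symm]
  have hM : M.det = a * (bandMatrix a (m + 1)).det - N.det := by
    have hM₀ : M.submatrix (Fin.succAbove 0) Fin.succ = bandMatrix a (m + 1) := by
      ext r s
      simp [bandMatrix_apply, M]
    rw [Matrix.det_succ_column_zero, Fin.sum_univ_succ, Fin.sum_univ_succ,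
      sum_eq_zero fun i _ => by simp [bandMatrix_apply, M], hM₀]
    simp [bandMatrix_apply, M, N]
    ring
  have hN : N.det = (bandMatrix a m).det := by
    have hN₀ : N.submatrix Fin.succ (Fin.succAbove 0) = bandMatrix a m := by
      ext r s
      simp [bandMatrix_apply, M, N]
    rw [Matrix.det_succ_row_zero, sum_eq_single 0 (fun j _ hj => ?_) (by simp)]
    · rw [hN₀]
      simp [bandMatrix_apply, M, N, Nat.mod_eq_of_lt (show 2 < m + 3 by omega)]
    · have hj' : (j : ℕ) ≠ 0 := fun h => hj (Fin.ext h)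
      simp [bandMatrix_apply, M, N, hj']
  rw [hT, hM, hN]
  ring

end Recurrence

section FiberCard

variable {ι α : Type*} [Fintype ι] [DecidableEq α]

def fiberCard (f : ι → α) (a : α) : ℕ := #{i | f i = a}

theorem fiberCard_comp_perm (f : ι → α) (σ : Equiv.Perm ι) (a : α) :
    fiberCard (f ∘ σ) a = fiberCard f a :=
  card_equiv σ (by simp)

theorem exists_perm_comp_eq_iff {f g : ι → α} :
    (∃ σ : Equiv.Perm ι, f ∘ σ = g) ↔ ∀ a, fiberCard f a = fiberCard g a := by
  classical
  refine ⟨fun ⟨σ, hσ⟩ a => hσ ▸ (fiberCard_comp_perm f σ a).symm, fun h => ?_⟩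
  have e : ∀ a, { i // g i = a } ≃ { i // f i = a } := fun a =>
    Fintype.equivOfCardEq (by simp only [Fintype.card_subtype]; exact (h a).symm)
  refine ⟨(Equiv.sigmaFiberEquiv g).symm.trans
    ((Equiv.sigmaCongrRight e).trans (Equiv.sigmaFiberEquiv f)), funext fun i => ?_⟩
  exact (e (g i) ⟨i, rfl⟩).2

end FiberCard

theorem Fin.card_filter_val_not_lt {n : ℕ} (m : ℕ) : #{j : Fin n | ¬(j : ℕ) < m} = n - m := by
  rw [filter_not, card_sdiff_of_subset (filter_subset _ _), card_univ, Fintype.card_fin,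
    Fin.card_filter_val_lt]
  omega

section OneThreeShapes

variable {n : ℕ}

def tuples013 (n : ℕ) : Finset (Fin n → ℕ) := Fintype.piFinset fun _ => {0, 1, 3}

theorem mem_tuples013 {β : Fin n → ℕ} : β ∈ tuples013 n ↔ ∀ j, β j = 0 ∨ β j = 1 ∨ β j = 3 := by
  simp [tuples013]

theorem fiberCard_zero_add_one_add_three {β : Fin n → ℕ} (hβ : β ∈ tuples013 n) :
    fiberCard β 0 + fiberCard β 1 + fiberCard β 3 = n := by
  rw [mem_tuples013] at hβ
  simp only [fiberCard, card_filter, ← sum_add_distrib]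
  calc ∑ j, _ = ∑ _j : Fin n, 1 :=
        sum_congr rfl fun j _ => by rcases hβ j with h | h | h <;> simp [h]
    _ = n := by simp

theorem sum_eq_fiberCard_one_add_three {β : Fin n → ℕ} (hβ : β ∈ tuples013 n) :
    ∑ j, β j = fiberCard β 1 + 3 * fiberCard β 3 := by
  rw [mem_tuples013] at hβ
  simp only [fiberCard, card_filter, mul_sum, ← sum_add_distrib]
  refine sum_congr rfl fun j _ => ?_
  rcases hβ j with h | h | h <;> simp [h]

theorem fiberCard_eq_zero_of_mem_tuples013 {β : Fin n → ℕ} (hβ : β ∈ tuples013 n) {v : ℕ}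
    (hv : v ≠ 0 ∧ v ≠ 1 ∧ v ≠ 3) : fiberCard β v = 0 := by
  rw [mem_tuples013] at hβ
  refine card_eq_zero.2 (filter_eq_empty_iff.2 fun j _ => ?_)
  rcases hβ j with h | h | h <;> omega

theorem fiberCard_eq_iff_of_mem_tuples013 {β β' : Fin n → ℕ} (hβ : β ∈ tuples013 n)
    (hβ' : β' ∈ tuples013 n) : (∀ v, fiberCard β v = fiberCard β' v) ↔
      fiberCard β 1 = fiberCard β' 1 ∧ fiberCard β 3 = fiberCard β' 3 := by
  refine ⟨fun h => ⟨h 1, h 3⟩, fun ⟨h1, h3⟩ v => ?_⟩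
  have htot := fiberCard_zero_add_one_add_three hβ
  have htot' := fiberCard_zero_add_one_add_three hβ'
  by_cases hv : v ≠ 0 ∧ v ≠ 1 ∧ v ≠ 3
  · rw [fiberCard_eq_zero_of_mem_tuples013 hβ hv, fiberCard_eq_zero_of_mem_tuples013 hβ' hv]
  · obtain rfl | rfl | rfl : v = 0 ∨ v = 1 ∨ v = 3 := by tauto
    all_goals omega

theorem mem_Par_iff {m : ℕ} {μ : Fin n → ℕ} : μ ∈ Par n m ↔ Monotone μ ∧ ∑ i, μ i = m := by
  refine ⟨fun h => (mem_filter.1 h).2, fun ⟨hmono, hsum⟩ => mem_filter.2 ⟨?_, hmono, hsum⟩⟩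
  refine Fintype.mem_piFinset.2 fun i => mem_range.2 (Nat.lt_succ_of_le ?_)
  exact hsum ▸ single_le_sum (fun j _ => Nat.zero_le (μ j)) (mem_univ i)

theorem tuple3_monotone (a b c : ℕ) : Monotone (tuple3 n a b c) := by
  intro i j hij
  have : (i : ℕ) ≤ j := hij
  unfold tuple3
  split_ifs <;> omega

theorem tuple3_ones_threes_apply (k l : ℕ) (j : Fin n) :
    tuple3 n k 0 l j = if (j : ℕ) < n - k - l then 0 else if (j : ℕ) < n - l then 1 else 3 := by
  unfold tuple3
  split_ifs <;> omega

theorem tuple3_mem_tuples013 (k l : ℕ) : tuple3 n k 0 l ∈ tuples013 n :=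
  mem_tuples013.2 fun j => by rw [tuple3_ones_threes_apply]; split_ifs <;> simp

theorem fiberCard_tuple3_zero (k l : ℕ) : fiberCard (tuple3 n k 0 l) 0 = n - k - l := by
  have hfilter : univ.filter (fun j : Fin n => tuple3 n k 0 l j = 0) =
      univ.filter fun j : Fin n => (j : ℕ) < n - k - l :=
    filter_congr fun j _ => by rw [tuple3_ones_threes_apply]; split_ifs <;> simp_all
  rw [fiberCard, hfilter, Fin.card_filter_val_lt]
  omega

theorem fiberCard_tuple3_three (k l : ℕ) (hkl : k + l ≤ n) : fiberCard (tuple3 n k 0 l) 3 = l := by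
  have hfilter : univ.filter (fun j : Fin n => tuple3 n k 0 l j = 3) =
      univ.filter fun j : Fin n => ¬(j : ℕ) < n - l :=
    filter_congr fun j _ => by rw [tuple3_ones_threes_apply]; split_ifs <;> simp <;> omega
  rw [fiberCard, hfilter, Fin.card_filter_val_not_lt]
  omega

theorem fiberCard_tuple3_one (k l : ℕ) (hkl : k + l ≤ n) : fiberCard (tuple3 n k 0 l) 1 = k := by
  have := fiberCard_zero_add_one_add_three (tuple3_mem_tuples013 (n := n) k l)
  rw [fiberCard_tuple3_zero, fiberCard_tuple3_three k l hkl] at this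
  omega

theorem tuple3_mem_Par (k l : ℕ) (hkl : k + l ≤ n) : tuple3 n k 0 l ∈ Par n (k + 3 * l) := by
  rw [mem_Par_iff, sum_eq_fiberCard_one_add_three (tuple3_mem_tuples013 k l),
    fiberCard_tuple3_one k l hkl, fiberCard_tuple3_three k l hkl]
  exact ⟨tuple3_monotone _ _ _, rfl⟩

theorem tuple3_twos_apply (b : ℕ) (j : Fin n) :
    tuple3 n 0 b 0 j = if (j : ℕ) < n - b then 0 else 2 := by
  unfold tuple3
  split_ifs <;> omega

theorem tuple3_twos_mem_Par (b : ℕ) (hb : b ≤ n) : tuple3 n 0 b 0 ∈ Par n (2 * b) := by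
  refine mem_Par_iff.2 ⟨tuple3_monotone _ _ _, ?_⟩
  simp only [tuple3_twos_apply, sum_ite, sum_const_zero, sum_const, smul_eq_mul]
  rw [Fin.card_filter_val_not_lt]
  omega

def shapes13 (n : ℕ) : Finset (ℕ × ℕ) :=
  (range (n + 1) ×ˢ range (n + 1)).filter fun p => p.1 + p.2 ≤ n

theorem image_tuple3_comp_perm {k l : ℕ} (hkl : k + l ≤ n) :
    univ.image (fun σ : Equiv.Perm (Fin n) => tuple3 n k 0 l ∘ σ) =
      (tuples013 n).filter fun β => fiberCard β 1 = k ∧ fiberCard β 3 = l := by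
  ext β
  simp only [mem_image, mem_univ, true_and, mem_filter]
  constructor
  · rintro ⟨σ, rfl⟩
    refine ⟨mem_tuples013.2 fun j => mem_tuples013.1 (tuple3_mem_tuples013 k l) (σ j), ?_⟩
    rw [fiberCard_comp_perm, fiberCard_comp_perm, fiberCard_tuple3_one k l hkl,
      fiberCard_tuple3_three k l hkl]
    exact ⟨rfl, rfl⟩
  · rintro ⟨hβ, h1, h3⟩
    rw [exists_perm_comp_eq_iff, fiberCard_eq_iff_of_mem_tuples013 (tuple3_mem_tuples013 k l) hβ,
      fiberCard_tuple3_one k l hkl, fiberCard_tuple3_three k l hkl]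
    exact ⟨h1.symm, h3.symm⟩

theorem prod_aeval_genPoly {R : Type*} [CommRing R] (a : R) :
    ∏ j, Polynomial.aeval (X j : MvPolynomial (Fin n) R) (genPoly a) =
      ∑ p ∈ shapes13 n, C (a ^ p.1) * map (Int.castRingHom R) (msym n (tuple3 n p.1 0 p.2)) := by
  have hfactor : ∀ j, Polynomial.aeval (X j : MvPolynomial (Fin n) R) (genPoly a) =
      ∑ d ∈ ({0, 1, 3} : Finset ℕ), C (if d = 1 then a else 1) * X j ^ d := fun j => by
    simp [genPoly]
    ring
  have hexpand : ∏ j, Polynomial.aeval (X j : MvPolynomial (Fin n) R) (genPoly a) =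
      ∑ β ∈ tuples013 n, C (a ^ fiberCard β 1) * map (Int.castRingHom R) (xpow n β) := by
    simp_rw [hfactor, prod_univ_sum, prod_mul_distrib, ← map_prod, ← prod_filter, prod_const]
    simp [xpow, fiberCard, tuples013]
  rw [hexpand, ← sum_fiberwise_of_maps_to (g := fun β => (fiberCard β 1, fiberCard β 3))
    (t := shapes13 n) fun β hβ => ?_]
  · refine sum_congr rfl fun p hp => ?_
    rw [msym, map_sum, mul_sum, image_tuple3_comp_perm (mem_filter.1 hp).2]
    refine sum_congr (by simp [Prod.ext_iff]) fun β hβ => ?_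
    rw [(mem_filter.1 hβ).2.1]
  · have := fiberCard_zero_add_one_add_three hβ
    simp only [shapes13, mem_filter, mem_product, mem_range]
    omega

end OneThreeShapes

theorem map_aDet_deltaN {n : ℕ} {R : Type*} [CommRing R] :
    map (Int.castRingHom R) (aDet n (deltaN n)) =
      (Matrix.of fun i j : Fin n => (X j : MvPolynomial (Fin n) R) ^ (i : ℕ)).det := by
  rw [aDet, RingHom.map_det]
  congr 1
  ext i j
  simp [deltaN]

theorem coeff_prod_aeval_mul_aDet_twos {n : ℕ} {R : Type*} [CommRing R] (q : R[X])
    (hq : q.coeff 0 = 1) {b : ℕ} (hb : b ≤ n) :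
    coeff (Finsupp.equivFunOnFinite.symm fun j => tuple3 n 0 b 0 j + j)
      ((∏ j, Polynomial.aeval (X j) q) * map (Int.castRingHom R) (aDet n (deltaN n))) =
      (coeffMatrix q fun s : Fin b => (s : ℕ) + 2).det := by
  obtain ⟨c, rfl⟩ : ∃ c, n = b + c := ⟨n - b, by omega⟩
  have hγ : (fun j : Fin (b + c) => tuple3 (b + c) 0 b 0 j + (j : ℕ)) =
      fun s : Fin (b + c) => if (s : ℕ) < c then (s : ℕ) else s + 2 := by
    funext s
    rw [tuple3_twos_apply]
    split_ifs <;> omega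
  rw [map_aDet_deltaN, coeff_prod_aeval_mul_det_X_pow, Finsupp.coe_equivFunOnFinite_symm, hγ,
    det_coeffMatrix_delta_add_twos q hq]

section InverseKostka

variable {n : ℕ} {K : (Fin n → ℕ) → (Fin n → ℕ) → ℤ}

theorem strictMono_add_val {μ : Fin n → ℕ} (hμ : Monotone μ) :
    StrictMono fun i : Fin n => μ i + (i : ℕ) :=
  hμ.add_strictMono Fin.val_strictMono

theorem coeff_msym_mul_aDet (hK : IsInvKostka n K) {m m' : ℕ} {lam ν : Fin n → ℕ}
    (hlam : lam ∈ Par n m) (hν : ν ∈ Par n m') :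
    coeff (Finsupp.equivFunOnFinite.symm fun j => ν j + j) (msym n lam * aDet n (deltaN n)) =
      if m = m' then K lam ν else 0 := by
  have hcoeff : ∀ μ ∈ Par n m, coeff (Finsupp.equivFunOnFinite.symm fun j => ν j + j)
      (C (K lam μ) * aDet n fun i => μ i + i) = if ν = μ then K lam μ else 0 := fun μ hμ => by
    rw [coeff_C_mul, coeff_aDet_of_strictMono (strictMono_add_val (mem_Par_iff.1 hμ).1)
      (by simpa using strictMono_add_val (mem_Par_iff.1 hν).1)]
    simp [funext_iff]
  have hmem : ν ∈ Par n m ↔ m = m' :=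
    ⟨fun h => (mem_Par_iff.1 h).2.symm.trans (mem_Par_iff.1 hν).2, fun h => h ▸ hν⟩
  simp only [hK m lam hlam, coeff_sum, sum_congr rfl hcoeff, sum_ite_eq, hmem]

theorem coeff_prod_aeval_genPoly_mul_aDet {R : Type*} [CommRing R] (a : R)
    (hK : IsInvKostka n K) {b : ℕ} (hb : b ≤ n) :
    coeff (Finsupp.equivFunOnFinite.symm fun j => tuple3 n 0 b 0 j + j)
      ((∏ j, Polynomial.aeval (X j) (genPoly a)) * map (Int.castRingHom R) (aDet n (deltaN n))) =
      ∑ p ∈ shapes13 n with p.1 + 3 * p.2 = 2 * b,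
        a ^ p.1 * K (tuple3 n p.1 0 p.2) (tuple3 n 0 b 0) := by
  rw [prod_aeval_genPoly, sum_mul, coeff_sum, sum_filter]
  refine sum_congr rfl fun p hp => ?_
  rw [mul_assoc, ← map_mul, coeff_C_mul, coeff_map, coeff_msym_mul_aDet hK
    (tuple3_mem_Par p.1 p.2 (mem_filter.1 hp).2) (tuple3_twos_mem_Par b hb)]
  split_ifs <;> simp

theorem hpoly_eq_sum_shapes13 (b : ℕ) (hb : 2 * b ≤ n) :
    hpoly n K b = ∑ p ∈ shapes13 n with p.1 + 3 * p.2 = 2 * b,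
      (Polynomial.X : ℤ[X]) ^ p.1 * K (tuple3 n p.1 0 p.2) (tuple3 n 0 b 0) := by
  refine sum_nbij' (fun l => (2 * b - 3 * l, l)) Prod.snd (fun l hl => ?_) (fun p hp => ?_)
    (fun l _ => rfl) (fun p hp => ?_) (fun l _ => ?_)
  · simp only [mem_range, mem_filter, shapes13, mem_product] at hl ⊢
    omega
  · simp only [mem_range, mem_filter, shapes13, mem_product] at hp ⊢
    omega
  · simp only [mem_filter] at hp
    exact Prod.ext (by simp only; omega) rfl
  · simp [mul_comm]

theorem hpoly_eq_det_bandMatrix (hK : IsInvKostka n K) {b : ℕ} (hb : 2 * b ≤ n) :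
    hpoly n K b = (bandMatrix (Polynomial.X : ℤ[X]) b).det := by
  rw [hpoly_eq_sum_shapes13 b hb, ← coeff_prod_aeval_genPoly_mul_aDet _ hK (by omega),
    coeff_prod_aeval_mul_aDet_twos _ (by simp [genPoly]) (by omega)]
  rfl

end InverseKostka

/-- The recurrence `h_b(t) = -t·h_{b-2}(t) + h_{b-3}(t)` for `b ≥ 3`. -/
theorem stmt19 (n b : ℕ) (hb : 3 ≤ b) (hn : 2 * b ≤ n)
    (K : (Fin n → ℕ) → (Fin n → ℕ) → ℤ) (hK : IsInvKostka n K) :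
    hpoly n K b = -Polynomial.X * hpoly n K (b - 2) + hpoly n K (b - 3) := by
  obtain ⟨m, rfl⟩ : ∃ m, b = m + 3 := ⟨b - 3, by omega⟩
  rw [show m + 3 - 2 = m + 1 by omega, Nat.add_sub_cancel, hpoly_eq_det_bandMatrix hK hn,
    hpoly_eq_det_bandMatrix hK (by omega), hpoly_eq_det_bandMatrix hK (by omega)]
  exact det_bandMatrix_add_three _ m
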